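/- arXiv:2007.11160 — 2 statements merged into one kernel-verified Lean document; each statement's English description precedes it below -/
import Mathlib

section
/- Let A be an associative ring that is a free module over ℤ[t, t^{-1}] with a basis B. If the quotient ring A/(t-1)A is an integral domain and A/(t-1)A is nonzero, then A is a domain (has no zero divisors). -/
open LaurentPolynomial

/-- Let A be an associative ring that is a free module over ℤ[t,t⁻¹] with a basis.
If the quotient A/(t-1)A is a (nonzero) integral domain, then A has no zero
divisors.  The quotient is presented as a surjective ring homomorphism g : A → D
onto an integral domain D whose kernel is exactly (t-1)A. -/
theorem stmt6 {A : Type*} [Ring A] [Algebra (LaurentPolynomial ℤ) A]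
    {ι : Type*} (b : Module.Basis ι (LaurentPolynomial ℤ) A)
    {D : Type*} [Ring D] [IsDomain D] (g : A →+* D)
    (hsurj : Function.Surjective g)
    (hker : ∀ x : A, g x = 0 ↔
      ∃ y : A, x = algebraMap (LaurentPolynomial ℤ) A (T 1 - 1) * y) :
    ∀ a c : A, a * c = 0 → a = 0 ∨ c = 0 := by
  classical
  set R := LaurentPolynomial ℤ with hR
  haveI : IsDomain R := NoZeroDivisors.to_isDomain _
  haveI : IsNoetherianRing R := by
    haveI := LaurentPolynomial.isLocalization (R := ℤ)
    exact IsLocalization.isNoetherianRing (Submonoid.powers (Polynomial.X : Polynomial ℤ)) _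
      inferInstance
  set t1 : R := T 1 - 1 with ht1
  have ht1ne : t1 ≠ 0 := by
    rw [ht1, sub_ne_zero]
    intro h
    have h3 := congrArg (fun f : LaurentPolynomial ℤ => f.coeff 1) h
    rw [← T_zero] at h3
    simp only [T_apply] at h3
    norm_num at h3
  -- t1 is not a unit of R
  have hg0 : g (algebraMap R A t1) = 0 := (hker _).2 ⟨1, (mul_one _).symm⟩
  have hnu : ¬ IsUnit t1 := by
    rintro ⟨u, hu⟩
    have h1 : g (algebraMap R A t1) * g (algebraMap R A (↑u⁻¹ : R)) = 1 := by
      rw [← map_mul, ← map_mul, ← hu, Units.mul_inv, map_one, map_one]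
    rw [hg0, zero_mul] at h1
    exact zero_ne_one h1
  -- only finitely many powers of t1 divide a nonzero scalar (Krull intersection)
  have hItop : Ideal.span {t1} ≠ ⊤ := fun h => hnu (Ideal.span_singleton_eq_top.1 h)
  have fin : ∀ r : R, r ≠ 0 → ∃ N, ¬ t1 ^ N ∣ r := by
    intro r hr
    by_contra h
    push_neg at h
    have hmem : r ∈ ⨅ n : ℕ, (Ideal.span {t1}) ^ n := by
      simp only [Ideal.mem_iInf]
      intro n
      rw [Ideal.span_singleton_pow, Ideal.mem_span_singleton]
      exact h n
    rw [Ideal.iInf_pow_eq_bot_of_isDomain _ hItop] at hmem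
    exact hr hmem
  -- smul by a nonzero scalar is injective (A is free over the domain R)
  have hsmul : ∀ (s : R), s ≠ 0 → ∀ z : A, s • z = 0 → z = 0 := by
    intro s hs z hz
    have h1 := congrArg b.repr hz
    rw [map_smul, map_zero] at h1
    apply b.repr.injective
    rw [map_zero]
    refine Finsupp.ext fun i => ?_
    have h2 : (s • b.repr z) i = (0 : ι →₀ R) i := by rw [h1]
    rw [Finsupp.smul_apply, smul_eq_mul, Finsupp.coe_zero, Pi.zero_apply] at h2
    rw [Finsupp.coe_zero, Pi.zero_apply]
    exact (mul_eq_zero.1 h2).resolve_left hs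
  -- any nonzero element is t1 ^ n • x' with g x' ≠ 0
  have key : ∀ x : A, x ≠ 0 → ∃ (x' : A) (n : ℕ), x = t1 ^ n • x' ∧ g x' ≠ 0 := by
    intro x hx
    obtain ⟨i, hi⟩ : ∃ i, b.repr x i ≠ 0 := by
      by_contra h
      push_neg at h
      apply hx
      apply b.repr.injective
      rw [map_zero]
      exact Finsupp.ext fun i => h i
    obtain ⟨N, hN⟩ := fin _ hi
    set P : ℕ → Prop := fun n => ∃ y : A, x = t1 ^ n • y with hP
    have hP0 : P 0 := ⟨x, by simp⟩
    have hbound : ∀ n, P n → n < N := by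
      rintro n ⟨y, hy⟩
      by_contra hn
      push_neg at hn
      apply hN
      have hco : b.repr x i = t1 ^ n * b.repr y i := by
        rw [hy, map_smul, Finsupp.smul_apply, smul_eq_mul]
      exact dvd_trans (pow_dvd_pow _ hn) ⟨b.repr y i, hco⟩
    obtain ⟨x', hx'⟩ : P (Nat.findGreatest P N) :=
      Nat.findGreatest_spec (Nat.zero_le N) hP0
    refine ⟨x', Nat.findGreatest P N, hx', ?_⟩
    intro hgx'
    obtain ⟨y, hy⟩ := (hker x').1 hgx'
    rw [← Algebra.smul_def] at hy
    have hPm1 : P (Nat.findGreatest P N + 1) := by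
      refine ⟨y, ?_⟩
      rw [hx', hy, smul_smul, ← pow_succ]
    exact Nat.findGreatest_is_greatest (Nat.lt_succ_self _)
      (le_of_lt (hbound _ hPm1)) hPm1
  -- main argument
  intro a c hac
  by_contra hcon
  push_neg at hcon
  obtain ⟨ha, hc⟩ := hcon
  obtain ⟨a', m, ham, hga⟩ := key a ha
  obtain ⟨c', n, hcn, hgc⟩ := key c hc
  have hzero : (t1 ^ m * t1 ^ n) • (a' * c') = 0 := by
    rw [← smul_smul, ← mul_smul_comm, ← smul_mul_assoc, ← ham, ← hcn, hac]
  have hac' : a' * c' = 0 :=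
    hsmul _ (mul_ne_zero (pow_ne_zero _ ht1ne) (pow_ne_zero _ ht1ne)) _ hzero
  have : g a' * g c' = 0 := by rw [← map_mul, hac', map_zero]
  rcases mul_eq_zero.1 this with h | h
  · exact hga h
  · exact hgc h
end

section
/- Let n ≥ 4 and let S = ℂ[β_{ij} : 1 ≤ i < j ≤ n]/J where J is generated by the Plücker relations β_{ik}β_{jl} − β_{ij}β_{kl} − β_{il}β_{jk} for all 1 ≤ i < j < k < l ≤ n (indices extended symmetrically by β_{ji} = β_{ij}). Then S is an integral domain. -/
/-- Index set of Plücker coordinates: pairs (i,j) with i < j in Fin n. -/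
abbrev PlIdx (n : ℕ) := {p : Fin n × Fin n // p.1 < p.2}

/-- The Plücker relations β_{ik}β_{jl} − β_{ij}β_{kl} − β_{il}β_{jk}
for 1 ≤ i < j < k < l ≤ n. -/
def pluckerRels (n : ℕ) : Set (MvPolynomial (PlIdx n) ℂ) :=
  {f | ∃ (i j k l : Fin n) (h1 : i < j) (h2 : j < k) (h3 : k < l),
    f = MvPolynomial.X ⟨(i, k), h1.trans h2⟩ * MvPolynomial.X ⟨(j, l), h2.trans h3⟩
      - MvPolynomial.X ⟨(i, j), h1⟩ * MvPolynomial.X ⟨(k, l), h3⟩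
      - MvPolynomial.X ⟨(i, l), (h1.trans h2).trans h3⟩ * MvPolynomial.X ⟨(j, k), h2⟩}

namespace Plk
open MvPolynomial
variable {n : ℕ}

/-- The 2×2 minor x_i y_j - x_j y_i associated to a chord (i,j). -/
noncomputable def mnr (p : PlIdx n) : MvPolynomial (Fin n ⊕ Fin n) ℂ :=
  X (Sum.inl p.1.1) * X (Sum.inr p.1.2) - X (Sum.inl p.1.2) * X (Sum.inr p.1.1)

/-- The algebra map sending β_{ij} to the minor x_i y_j - x_j y_i. -/
noncomputable def phi (n : ℕ) : MvPolynomial (PlIdx n) ℂ →ₐ[ℂ] MvPolynomial (Fin n ⊕ Fin n) ℂ :=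
  aeval mnr

noncomputable def Phi (d : PlIdx n →₀ ℕ) : MvPolynomial (Fin n ⊕ Fin n) ℂ :=
  phi n (monomial d (1:ℂ))

lemma Phi_zero : Phi (0 : PlIdx n →₀ ℕ) = 1 := by simp [Phi, monomial_zero']
lemma Phi_add (a b : PlIdx n →₀ ℕ) : Phi (a + b) = Phi a * Phi b := by
  rw [Phi, Phi, Phi, ← map_mul, monomial_mul, one_mul]
lemma Phi_single (p : PlIdx n) : Phi (Finsupp.single p 1) = mnr p := by
  rw [Phi, ← MvPolynomial.X, phi, aeval_X]

/-- Standard (straightened) exponents: no strictly nested pair of chords. -/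
def Std (d : PlIdx n →₀ ℕ) : Prop :=
  ∀ p ∈ d.support, ∀ q ∈ d.support, ¬ ((p.1.1 : ℕ) < (q.1.1 : ℕ) ∧ (q.1.2 : ℕ) < (p.1.2 : ℕ))

def w (d : PlIdx n →₀ ℕ) : ℕ := d.sum fun p k => k * ((p.1.2 : ℕ) - (p.1.1 : ℕ))^2
def lft (d : PlIdx n →₀ ℕ) : ℕ := d.sum fun p k => k * (p.1.1 : ℕ)
def xval : Fin n ⊕ Fin n → ℕ
  | Sum.inl i => (i : ℕ)
  | Sum.inr _ => 0
def xw (m : Fin n ⊕ Fin n →₀ ℕ) : ℕ := m.sum fun s k => k * xval s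
noncomputable def mu (d : PlIdx n →₀ ℕ) : Fin n ⊕ Fin n →₀ ℕ :=
  d.sum fun p k => k • (Finsupp.single (Sum.inl p.1.1) 1 + Finsupp.single (Sum.inr p.1.2) 1)
def mass (d : PlIdx n →₀ ℕ) : ℕ := d.sum fun _ k => k

lemma w_add (a b : PlIdx n →₀ ℕ) : w (a + b) = w a + w b :=
  Finsupp.sum_add_index' (fun _ => zero_mul _) (fun _ _ _ => add_mul _ _ _)
lemma lft_add (a b : PlIdx n →₀ ℕ) : lft (a + b) = lft a + lft b :=
  Finsupp.sum_add_index' (fun _ => zero_mul _) (fun _ _ _ => add_mul _ _ _)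
lemma xw_add (a b : Fin n ⊕ Fin n →₀ ℕ) : xw (a + b) = xw a + xw b :=
  Finsupp.sum_add_index' (fun _ => zero_mul _) (fun _ _ _ => add_mul _ _ _)
lemma mass_add (a b : PlIdx n →₀ ℕ) : mass (a + b) = mass a + mass b :=
  Finsupp.sum_add_index' (fun _ => rfl) (fun _ _ _ => rfl)
lemma mu_add (a b : PlIdx n →₀ ℕ) : mu (a + b) = mu a + mu b :=
  Finsupp.sum_add_index' (fun _ => zero_smul _ _) (fun _ _ _ => add_smul _ _ _)
lemma w_single (p : PlIdx n) : w (Finsupp.single p 1) = ((p.1.2 : ℕ) - (p.1.1 : ℕ))^2 := by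
  simp [w, Finsupp.sum_single_index]
lemma lft_single (p : PlIdx n) : lft (Finsupp.single p 1) = (p.1.1 : ℕ) := by
  simp [lft, Finsupp.sum_single_index]
lemma mass_single (p : PlIdx n) : mass (Finsupp.single p 1) = 1 := by
  simp [mass, Finsupp.sum_single_index]
lemma mu_single (p : PlIdx n) :
    mu (Finsupp.single p 1) = Finsupp.single (Sum.inl p.1.1) 1 + Finsupp.single (Sum.inr p.1.2) 1 := by
  simp [mu, Finsupp.sum_single_index]
lemma xw_single (s : Fin n ⊕ Fin n) (k : ℕ) : xw (Finsupp.single s k) = k * xval s := by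
  simp [xw, Finsupp.sum_single_index]
lemma mu_zero : mu (0 : PlIdx n →₀ ℕ) = 0 := rfl

lemma xw_mu (d : PlIdx n →₀ ℕ) : xw (mu d) = lft d := by
  induction d using Finsupp.induction with
  | zero => simp [mu_zero, xw, lft]
  | single_add p k e hpe hk ih =>
      rw [mu_add, xw_add, lft_add, ih]
      congr 1
      have h1 : mu (Finsupp.single p k)
          = Finsupp.single (Sum.inl p.1.1) k + Finsupp.single (Sum.inr p.1.2) k := by
        simp [mu, Finsupp.sum_single_index, Finsupp.smul_single, smul_eq_mul]
      rw [h1, xw_add, xw_single, xw_single]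
      simp [xval, lft, Finsupp.sum_single_index]

lemma single_le_of_mem {d : PlIdx n →₀ ℕ} {p : PlIdx n} (h : p ∈ d.support) :
    Finsupp.single p 1 ≤ d := by
  rw [Finsupp.single_le_iff]
  exact Nat.one_le_iff_ne_zero.mpr (Finsupp.mem_support_iff.mp h)

lemma mass_zero_iff {d : PlIdx n →₀ ℕ} : mass d = 0 ↔ d = 0 := by
  constructor
  · intro h
    rw [mass, Finsupp.sum, Finset.sum_eq_zero_iff] at h
    ext p
    by_cases hp : p ∈ d.support
    · exact h p hp
    · simpa using Finsupp.notMem_support_iff.mp hp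
  · rintro rfl; rfl

section coeffs

variable (p : PlIdx n)

noncomputable def Ap (p : PlIdx n) : Fin n ⊕ Fin n →₀ ℕ :=
  Finsupp.single (Sum.inl p.1.1) 1 + Finsupp.single (Sum.inr p.1.2) 1
noncomputable def Bp (p : PlIdx n) : Fin n ⊕ Fin n →₀ ℕ :=
  Finsupp.single (Sum.inl p.1.2) 1 + Finsupp.single (Sum.inr p.1.1) 1

lemma xw_Ap : xw (Ap p) = (p.1.1 : ℕ) := by
  rw [Ap, xw_add, xw_single, xw_single]; simp [xval]
lemma xw_Bp : xw (Bp p) = (p.1.2 : ℕ) := by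
  rw [Bp, xw_add, xw_single, xw_single]; simp [xval]

lemma mnr_eq : mnr p = monomial (Ap p) 1 - monomial (Bp p) 1 := by
  rw [mnr, X, X, X, X, monomial_mul, monomial_mul, one_mul, Ap, Bp]

lemma coeff_step (e : PlIdx n →₀ ℕ) (m : Fin n ⊕ Fin n →₀ ℕ) :
    coeff m (Phi e * mnr p) =
      (if Ap p ≤ m then coeff (m - Ap p) (Phi e) else 0) -
      (if Bp p ≤ m then coeff (m - Bp p) (Phi e) else 0) := by
  rw [mnr_eq, mul_sub, coeff_sub, coeff_mul_monomial', coeff_mul_monomial']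
  simp only [mul_one]

/-- Lower bound on x-weight of monomials of `Phi d`, with equality case. -/
lemma lemC : ∀ N (d : PlIdx n →₀ ℕ), mass d ≤ N → ∀ m, coeff m (Phi d) ≠ 0 →
    lft d ≤ xw m ∧ (xw m = lft d → m = mu d) := by
  intro N
  induction N with
  | zero =>
    intro d hd m hm
    have h0 : d = 0 := mass_zero_iff.mp (Nat.le_zero.mp hd)
    subst h0
    rw [Phi_zero] at hm
    have : m = 0 := by
      by_contra hne
      exact hm (by rw [coeff_one]; simp [Ne.symm hne])
    subst this
    simp [lft, xw, mu_zero]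
  | succ N ih =>
    intro d hd m hm
    by_cases h0 : d = 0
    · subst h0
      rw [Phi_zero] at hm
      have : m = 0 := by
        by_contra hne
        exact hm (by rw [coeff_one]; simp [Ne.symm hne])
      subst this
      simp [lft, xw, mu_zero]
    · obtain ⟨q, hq⟩ := Finsupp.support_nonempty_iff.mpr h0
      set e := d - Finsupp.single q 1 with he
      have hde : e + Finsupp.single q 1 = d := tsub_add_cancel_of_le (single_le_of_mem hq)
      have hmass : mass e + 1 = mass d := by rw [← hde, mass_add, mass_single]
      have hPhi : Phi d = Phi e * mnr q := by rw [← hde, Phi_add, Phi_single]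
      have hlft : lft d = lft e + (q.1.1 : ℕ) := by rw [← hde, lft_add, lft_single]
      have hmu : mu d = mu e + Ap q := by rw [← hde, mu_add, mu_single, Ap]
      rw [hPhi, coeff_step] at hm
      have hq2 : (q.1.1 : ℕ) < (q.1.2 : ℕ) := q.2
      have hcases : ((Ap q ≤ m) ∧ coeff (m - Ap q) (Phi e) ≠ 0) ∨
          ((Bp q ≤ m) ∧ coeff (m - Bp q) (Phi e) ≠ 0) := by
        by_contra hc
        push_neg at hc
        apply hm
        obtain ⟨hc1, hc2⟩ := hc
        split_ifs with hA hB
        all_goals simp_all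
      rcases hcases with ⟨hA, hcA⟩ | ⟨hB, hcB⟩
      · obtain ⟨ih1, ih2⟩ := ih e (by omega) _ hcA
        have hxm : xw m = xw (m - Ap q) + (q.1.1 : ℕ) := by
          conv_lhs => rw [← tsub_add_cancel_of_le hA]
          rw [xw_add, xw_Ap]
        constructor
        · omega
        · intro hEq
          have hxe : xw (m - Ap q) = lft e := by omega
          have hmA := ih2 hxe
          rw [hmu, ← hmA]
          exact (tsub_add_cancel_of_le hA).symm
      · obtain ⟨ih1, ih2⟩ := ih e (by omega) _ hcB
        have hxm : xw m = xw (m - Bp q) + (q.1.2 : ℕ) := by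
          conv_lhs => rw [← tsub_add_cancel_of_le hB]
          rw [xw_add, xw_Bp]
        constructor
        · omega
        · intro hEq
          omega

/-- The leading coefficient of `Phi d` at the monomial `mu d` is 1. -/
lemma lemD : ∀ N (d : PlIdx n →₀ ℕ), mass d ≤ N → coeff (mu d) (Phi d) = 1 := by
  intro N
  induction N with
  | zero =>
    intro d hd
    have h0 : d = 0 := mass_zero_iff.mp (Nat.le_zero.mp hd)
    subst h0
    simp [Phi_zero, mu_zero, coeff_one]
  | succ N ih =>
    intro d hd
    by_cases h0 : d = 0
    · subst h0
      simp [Phi_zero, mu_zero, coeff_one]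
    · obtain ⟨q, hq⟩ := Finsupp.support_nonempty_iff.mpr h0
      set e := d - Finsupp.single q 1 with he
      have hde : e + Finsupp.single q 1 = d := tsub_add_cancel_of_le (single_le_of_mem hq)
      have hmass : mass e + 1 = mass d := by rw [← hde, mass_add, mass_single]
      have hPhi : Phi d = Phi e * mnr q := by rw [← hde, Phi_add, Phi_single]
      have hlft : lft d = lft e + (q.1.1 : ℕ) := by rw [← hde, lft_add, lft_single]
      have hmu : mu d = mu e + Ap q := by rw [← hde, mu_add, mu_single, Ap]
      have hq2 : (q.1.1 : ℕ) < (q.1.2 : ℕ) := q.2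
      rw [hPhi, coeff_step]
      have hAle : Ap q ≤ mu d := hmu ▸ le_add_self
      have hsub : mu d - Ap q = mu e := by rw [hmu, add_tsub_cancel_right]
      rw [if_pos hAle, hsub, ih e (by omega)]
      have hB0 : (if Bp q ≤ mu d then coeff (mu d - Bp q) (Phi e) else 0) = 0 := by
        split_ifs with hB
        · by_contra hc
          obtain ⟨ih1, -⟩ := lemC N e (by omega) _ hc
          have hx : xw (mu d) = xw (mu d - Bp q) + (q.1.2 : ℕ) := by
            conv_lhs => rw [← tsub_add_cancel_of_le hB]
            rw [xw_add, xw_Bp]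
          have hxmu : xw (mu d) = lft d := xw_mu d
          omega
        · rfl
      rw [hB0, sub_zero]

end coeffs

lemma mu_apply_inl (d : PlIdx n →₀ ℕ) (i : Fin n) :
    mu d (Sum.inl i) ≠ 0 ↔ ∃ p ∈ d.support, p.1.1 = i := by
  rw [mu, Finsupp.sum_apply, Finsupp.sum, Ne, Finset.sum_eq_zero_iff]
  push_neg
  constructor
  · rintro ⟨p, hp, hne⟩
    refine ⟨p, hp, ?_⟩
    by_contra h
    exact hne (by simp [Finsupp.single_apply, h])
  · rintro ⟨p, hp, rfl⟩
    exact ⟨p, hp, by simp [Finsupp.single_apply, Finsupp.mem_support_iff.mp hp]⟩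

lemma mu_apply_inr (d : PlIdx n →₀ ℕ) (j : Fin n) :
    mu d (Sum.inr j) ≠ 0 ↔ ∃ p ∈ d.support, p.1.2 = j := by
  rw [mu, Finsupp.sum_apply, Finsupp.sum, Ne, Finset.sum_eq_zero_iff]
  push_neg
  constructor
  · rintro ⟨p, hp, hne⟩
    refine ⟨p, hp, ?_⟩
    by_contra h
    exact hne (by simp [Finsupp.single_apply, h])
  · rintro ⟨p, hp, rfl⟩
    exact ⟨p, hp, by simp [Finsupp.single_apply, Finsupp.mem_support_iff.mp hp]⟩

lemma mu_eq_zero {d : PlIdx n →₀ ℕ} (h : mu d = 0) : d = 0 := by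
  by_contra h0
  obtain ⟨p, hp⟩ := Finsupp.support_nonempty_iff.mpr h0
  exact (mu_apply_inl d p.1.1).mpr ⟨p, hp, rfl⟩ (by rw [h]; rfl)

lemma std_sub {d : PlIdx n →₀ ℕ} (hstd : Std d) (e : PlIdx n →₀ ℕ) (he : e ≤ d) : Std e := by
  intro p hp q hq
  have hps : p ∈ d.support := by
    rw [Finsupp.mem_support_iff] at hp ⊢
    exact fun h => hp (Nat.le_zero.mp (h ▸ he p))
  have hqs : q ∈ d.support := by
    rw [Finsupp.mem_support_iff] at hq ⊢
    exact fun h => hq (Nat.le_zero.mp (h ▸ he q))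
  exact hstd p hps q hqs

lemma exists_max_chord {d : PlIdx n →₀ ℕ} (hstd : Std d) (h0 : d ≠ 0) :
    ∃ c ∈ d.support,
      (∀ p ∈ d.support, (p.1.1 : ℕ) ≤ (c.1.1 : ℕ)) ∧
      (∀ p ∈ d.support, (p.1.2 : ℕ) ≤ (c.1.2 : ℕ)) := by
  obtain ⟨p₀, hp₀, hmax⟩ := Finset.exists_max_image d.support (fun p => (p.1.1 : ℕ))
    (Finsupp.support_nonempty_iff.mpr h0)
  have hfne : (d.support.filter (fun p => p.1.1 = p₀.1.1)).Nonempty :=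
    ⟨p₀, Finset.mem_filter.mpr ⟨hp₀, rfl⟩⟩
  obtain ⟨c, hc, hcmax⟩ := Finset.exists_max_image _ (fun p => (p.1.2 : ℕ)) hfne
  rw [Finset.mem_filter] at hc
  refine ⟨c, hc.1, ?_, ?_⟩
  · intro p hp
    rw [hc.2]
    exact hmax p hp
  · intro p hp
    by_cases hpl : p.1.1 = p₀.1.1
    · exact hcmax p (Finset.mem_filter.mpr ⟨hp, hpl⟩)
    · have hlt : (p.1.1 : ℕ) < (c.1.1 : ℕ) := by
        rw [hc.2]
        exact lt_of_le_of_ne (hmax p hp) (fun h => hpl (Fin.val_injective h))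
      have := hstd p hp c hc.1
      omega

/-- `mu` is injective on standard exponents. -/
lemma muinj : ∀ N (d d' : PlIdx n →₀ ℕ), mass d ≤ N → Std d → Std d' →
    mu d = mu d' → d = d' := by
  intro N
  induction N with
  | zero =>
    intro d d' hd _ _ hmu
    have h0 : d = 0 := by
      by_contra h
      obtain ⟨p, hp⟩ := Finsupp.support_nonempty_iff.mpr h
      have : mass d ≠ 0 := by
        intro hm
        rw [mass, Finsupp.sum, Finset.sum_eq_zero_iff] at hm
        exact Finsupp.mem_support_iff.mp hp (hm p hp)
      omega
    subst h0
    exact (mu_eq_zero (hmu.symm.trans rfl)).symm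
  | succ N ih =>
    intro d d' hd hstd hstd' hmu
    by_cases h0 : d = 0
    · subst h0
      exact (mu_eq_zero (hmu.symm.trans rfl)).symm
    · have h0' : d' ≠ 0 := by
        rintro rfl
        exact h0 (mu_eq_zero hmu)
      obtain ⟨c, hc, hcl, hcr⟩ := exists_max_chord hstd h0
      obtain ⟨c', hc', hcl', hcr'⟩ := exists_max_chord hstd' h0'
      have hcc : c = c' := by
        have h1 : (c.1.1 : ℕ) ≤ (c'.1.1 : ℕ) := by
          have : mu d' (Sum.inl c.1.1) ≠ 0 := by
            rw [← hmu]; exact (mu_apply_inl d c.1.1).mpr ⟨c, hc, rfl⟩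
          obtain ⟨p, hp, hpe⟩ := (mu_apply_inl d' c.1.1).mp this
          calc (c.1.1 : ℕ) = (p.1.1 : ℕ) := by rw [hpe]
            _ ≤ _ := hcl' p hp
        have h2 : (c'.1.1 : ℕ) ≤ (c.1.1 : ℕ) := by
          have : mu d (Sum.inl c'.1.1) ≠ 0 := by
            rw [hmu]; exact (mu_apply_inl d' c'.1.1).mpr ⟨c', hc', rfl⟩
          obtain ⟨p, hp, hpe⟩ := (mu_apply_inl d c'.1.1).mp this
          calc (c'.1.1 : ℕ) = (p.1.1 : ℕ) := by rw [hpe]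
            _ ≤ _ := hcl p hp
        have h3 : (c.1.2 : ℕ) ≤ (c'.1.2 : ℕ) := by
          have : mu d' (Sum.inr c.1.2) ≠ 0 := by
            rw [← hmu]; exact (mu_apply_inr d c.1.2).mpr ⟨c, hc, rfl⟩
          obtain ⟨p, hp, hpe⟩ := (mu_apply_inr d' c.1.2).mp this
          calc (c.1.2 : ℕ) = (p.1.2 : ℕ) := by rw [hpe]
            _ ≤ _ := hcr' p hp
        have h4 : (c'.1.2 : ℕ) ≤ (c.1.2 : ℕ) := by
          have : mu d (Sum.inr c'.1.2) ≠ 0 := by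
            rw [hmu]; exact (mu_apply_inr d' c'.1.2).mpr ⟨c', hc', rfl⟩
          obtain ⟨p, hp, hpe⟩ := (mu_apply_inr d c'.1.2).mp this
          calc (c'.1.2 : ℕ) = (p.1.2 : ℕ) := by rw [hpe]
            _ ≤ _ := hcr p hp
        apply Subtype.ext
        apply Prod.ext <;> apply Fin.val_injective <;> omega
      subst hcc
      set e := d - Finsupp.single c 1 with he
      set e' := d' - Finsupp.single c 1 with he'
      have hde : e + Finsupp.single c 1 = d := tsub_add_cancel_of_le (single_le_of_mem hc)
      have hde' : e' + Finsupp.single c 1 = d' := tsub_add_cancel_of_le (single_le_of_mem hc')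
      have hmass : mass e + 1 = mass d := by rw [← hde, mass_add, mass_single]
      have hmue : mu e = mu e' := by
        have : mu e + mu (Finsupp.single c 1) = mu e' + mu (Finsupp.single c 1) := by
          rw [← mu_add, ← mu_add, hde, hde', hmu]
        exact add_right_cancel this
      have := ih e e' (by omega) (std_sub hstd e (he ▸ tsub_le_self))
        (std_sub hstd' e' (he' ▸ tsub_le_self)) hmue
      rw [← hde, ← hde', this]

lemma key1 {i j k l : ℕ} (h1 : i < j) (h2 : j < k) (h3 : k < l) :
    (l - j)^2 + (k - i)^2 < (l - i)^2 + (k - j)^2 := by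
  obtain ⟨a, ha⟩ : ∃ a, j = i + a + 1 := ⟨j - i - 1, by omega⟩
  obtain ⟨b, hb⟩ : ∃ b, k = j + b + 1 := ⟨k - j - 1, by omega⟩
  obtain ⟨c, hc⟩ : ∃ c, l = k + c + 1 := ⟨l - k - 1, by omega⟩
  have e1 : l - j = b + c + 2 := by omega
  have e2 : k - i = a + b + 2 := by omega
  have e3 : l - i = a + b + c + 3 := by omega
  have e4 : k - j = b + 1 := by omega
  rw [e1, e2, e3, e4]
  have : (a+b+c+3)^2+(b+1)^2 = (b+c+2)^2+(a+b+2)^2 + 2*(a*c+a+c+1) := by ring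
  omega

lemma key2 {i j k l : ℕ} (h1 : i < j) (h2 : j < k) (h3 : k < l) :
    (j - i)^2 + (l - k)^2 < (l - i)^2 + (k - j)^2 := by
  obtain ⟨a, ha⟩ : ∃ a, j = i + a + 1 := ⟨j - i - 1, by omega⟩
  obtain ⟨b, hb⟩ : ∃ b, k = j + b + 1 := ⟨k - j - 1, by omega⟩
  obtain ⟨c, hc⟩ : ∃ c, l = k + c + 1 := ⟨l - k - 1, by omega⟩
  have e1 : j - i = a + 1 := by omega
  have e2 : l - k = c + 1 := by omega
  have e3 : l - i = a + b + c + 3 := by omega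
  have e4 : k - j = b + 1 := by omega
  rw [e1, e2, e3, e4]
  have : (a+b+c+3)^2+(b+1)^2 = (a+1)^2+(c+1)^2 + 2*(b^2+a*b+a*c+b*c+2*a+4*b+2*c+4) := by ring
  omega

/-- Span of standard monomials together with the Plücker ideal. -/
noncomputable def Tgt (n : ℕ) : Submodule ℂ (MvPolynomial (PlIdx n) ℂ) :=
  Submodule.span ℂ (Set.range fun d : {d : PlIdx n →₀ ℕ // Std d} => monomial d.1 (1:ℂ)) ⊔
  (Ideal.span (pluckerRels n)).restrictScalars ℂ

/-- Straightening: every monomial lies in the span of standard monomials plus the ideal. -/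
lemma lemA : ∀ N (d : PlIdx n →₀ ℕ), w d < N → monomial d (1:ℂ) ∈ Tgt n := by
  intro N
  induction N with
  | zero => intro d hd; omega
  | succ N ih =>
    intro d hd
    by_cases hstd : Std d
    · exact Submodule.mem_sup_left (Submodule.subset_span ⟨⟨d, hstd⟩, rfl⟩)
    · unfold Std at hstd
      push_neg at hstd
      obtain ⟨p, hp, q, hq, h1, h2⟩ := hstd
      have hpq : p ≠ q := fun h => by rw [h] at h1; omega
      have hij : p.1.1 < q.1.1 := by rw [Fin.lt_def]; exact h1
      have hjk : q.1.1 < q.1.2 := q.2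
      have hkl : q.1.2 < p.1.2 := by rw [Fin.lt_def]; exact h2
      have hdp := Finsupp.mem_support_iff.mp hp
      have hdq := Finsupp.mem_support_iff.mp hq
      have hle : Finsupp.single p 1 + Finsupp.single q 1 ≤ d := by
        rw [Finsupp.le_iff]
        intro a _
        simp only [Finsupp.add_apply, Finsupp.single_apply]
        by_cases hpa : p = a <;> by_cases hqa : q = a
        · exact absurd (hpa.trans hqa.symm) hpq
        · subst hpa; simp [hqa]; omega
        · subst hqa; simp [hpa]; omega
        · simp [hpa, hqa]
      set e := d - (Finsupp.single p 1 + Finsupp.single q 1) with hedef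
      have hde : e + (Finsupp.single p 1 + Finsupp.single q 1) = d := tsub_add_cancel_of_le hle
      set A1 : PlIdx n := ⟨(p.1.1, q.1.2), lt_trans hij hjk⟩ with hA1
      set A2 : PlIdx n := ⟨(q.1.1, p.1.2), lt_trans hjk hkl⟩ with hA2
      set B1 : PlIdx n := ⟨(p.1.1, q.1.1), hij⟩ with hB1
      set B2 : PlIdx n := ⟨(q.1.2, p.1.2), hkl⟩ with hB2
      set r : MvPolynomial (PlIdx n) ℂ := X A1 * X A2 - X B1 * X B2 - X p * X q with hr
      have hrmem : r ∈ pluckerRels n := ⟨p.1.1, q.1.1, q.1.2, p.1.2, hij, hjk, hkl, rfl⟩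
      have hXX : ∀ a b : PlIdx n, (X a * X b : MvPolynomial (PlIdx n) ℂ)
          = monomial (Finsupp.single a 1 + Finsupp.single b 1) 1 := by
        intro a b; rw [X, X, monomial_mul, one_mul]
      have hid : monomial d (1:ℂ) =
          monomial (e + (Finsupp.single A1 1 + Finsupp.single A2 1)) 1
          - monomial (e + (Finsupp.single B1 1 + Finsupp.single B2 1)) 1
          - monomial e 1 * r := by
        have hmul : ∀ a b : PlIdx n, monomial e (1:ℂ) * (X a * X b)
            = monomial (e + (Finsupp.single a 1 + Finsupp.single b 1)) 1 := by
          intro a b; rw [hXX, monomial_mul, one_mul]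
        calc monomial d (1:ℂ) = monomial e 1 * (X p * X q) := by rw [hmul, hde]
          _ = monomial e 1 * (X A1 * X A2) - monomial e 1 * (X B1 * X B2)
              - monomial e 1 * r := by rw [hr]; ring
          _ = _ := by rw [hmul, hmul]
      rw [hid]
      have hwd : w d = w e + (((p.1.2:ℕ) - (p.1.1:ℕ))^2 + ((q.1.2:ℕ) - (q.1.1:ℕ))^2) := by
        rw [← hde, w_add, w_add, w_single, w_single]
      have m1 : monomial (e + (Finsupp.single A1 1 + Finsupp.single A2 1)) (1:ℂ) ∈ Tgt n := by
        apply ih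
        rw [w_add, w_add, w_single, w_single]
        have := key1 h1 (Fin.lt_def.mp hjk) h2
        simp only [hA1, hA2]
        omega
      have m2 : monomial (e + (Finsupp.single B1 1 + Finsupp.single B2 1)) (1:ℂ) ∈ Tgt n := by
        apply ih
        rw [w_add, w_add, w_single, w_single]
        have := key2 h1 (Fin.lt_def.mp hjk) h2
        simp only [hB1, hB2]
        omega
      have m3 : monomial e (1:ℂ) * r ∈ Tgt n := by
        apply Submodule.mem_sup_right
        exact Ideal.mul_mem_left _ _ (Ideal.subset_span hrmem)
      exact sub_mem (sub_mem m1 m2) m3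

lemma smul_mono (c : ℂ) (d : PlIdx n →₀ ℕ) : monomial d c = c • monomial d (1:ℂ) := by
  rw [smul_monomial, smul_eq_mul, mul_one]

lemma all_mem (f : MvPolynomial (PlIdx n) ℂ) : f ∈ Tgt n := by
  rw [as_sum f]
  apply Submodule.sum_mem
  intro v _
  rw [smul_mono]
  exact Submodule.smul_mem _ _ (lemA (w v + 1) v (Nat.lt_succ_self _))

lemma rels_ker (f : MvPolynomial (PlIdx n) ℂ) (hf : f ∈ pluckerRels n) : phi n f = 0 := by
  obtain ⟨i, j, k, l, h1, h2, h3, rfl⟩ := hf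
  simp only [map_sub, map_mul, phi, aeval_X, mnr]
  ring

lemma ker_le_span (f : MvPolynomial (PlIdx n) ℂ) (hf : phi n f = 0) :
    f ∈ Ideal.span (pluckerRels n) := by
  obtain ⟨s, hs, g, hg, hsg⟩ := Submodule.mem_sup.mp (all_mem f)
  have hgI : g ∈ Ideal.span (pluckerRels n) := hg
  have hspan_ker : Ideal.span (pluckerRels n) ≤ RingHom.ker (phi n) :=
    Ideal.span_le.mpr fun r hr => RingHom.mem_ker.mpr (rels_ker r hr)
  have hphig : phi n g = 0 := RingHom.mem_ker.mp (hspan_ker hgI)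
  have hphis : phi n s = 0 := by
    have : phi n (s + g) = 0 := by rw [hsg]; exact hf
    rwa [map_add, hphig, add_zero] at this
  obtain ⟨c, hc⟩ := Finsupp.mem_span_range_iff_exists_finsupp.mp hs
  have hc0 : c = 0 := by
    by_contra hne
    obtain ⟨d₁, hd₁⟩ := Finsupp.support_nonempty_iff.mpr hne
    obtain ⟨d₀, hd₀, hmin⟩ := Finset.exists_min_image c.support (fun i => lft i.1) ⟨d₁, hd₁⟩
    have hsum : phi n s = ∑ i ∈ c.support, c i • Phi i.1 := by
      rw [← hc, Finsupp.sum, map_sum]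
      apply Finset.sum_congr rfl
      intro i _
      rw [map_smul, Phi]
    have hcoeff : coeff (mu d₀.1) (phi n s) = c d₀ := by
      rw [hsum, coeff_sum]
      rw [Finset.sum_eq_single d₀]
      · rw [coeff_smul, lemD (mass d₀.1) d₀.1 le_rfl, smul_eq_mul, mul_one]
      · intro i _ hi
        rw [coeff_smul, smul_eq_mul]
        by_cases hz : coeff (mu d₀.1) (Phi i.1) = 0
        · rw [hz, mul_zero]
        · exfalso
          obtain ⟨hle', heq'⟩ := lemC (mass i.1) i.1 le_rfl _ hz
          have hxw : xw (mu d₀.1) = lft d₀.1 := xw_mu _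
          have hminle := hmin i (by assumption)
          have heql : xw (mu d₀.1) = lft i.1 := by omega
          have hmueq : mu d₀.1 = mu i.1 := heq' heql
          have : i.1 = d₀.1 := muinj (mass i.1) i.1 d₀.1 le_rfl i.2 d₀.2 hmueq.symm
          exact hi (Subtype.ext this)
      · intro h
        exact absurd hd₀ h
    rw [hphis, coeff_zero] at hcoeff
    exact Finsupp.mem_support_iff.mp hd₀ hcoeff.symm
  have hs0 : s = 0 := by rw [← hc, hc0]; simp
  rw [← hsg, hs0, zero_add]
  exact hgI

end Plk

/-- For n ≥ 4, the Plücker coordinate ring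
S = ℂ[β_{ij}]/(β_{ik}β_{jl} − β_{ij}β_{kl} − β_{il}β_{jk}) is an integral domain. -/
theorem stmt12 (n : ℕ) (hn : 4 ≤ n) :
    IsDomain (MvPolynomial (PlIdx n) ℂ ⧸ Ideal.span (pluckerRels n)) := by
  have hker : Ideal.span (pluckerRels n) = RingHom.ker (Plk.phi n) := by
    apply le_antisymm
    · exact Ideal.span_le.mpr fun r hr => RingHom.mem_ker.mpr (Plk.rels_ker r hr)
    · intro f hf
      exact Plk.ker_le_span f (RingHom.mem_ker.mp hf)
  rw [Ideal.Quotient.isDomain_iff_prime, hker]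
  exact RingHom.ker_isPrime _
end
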